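/- With the Inverted-T density derivative formula dE/ds = [(a−b)e^{αε} + b(255+αs)e^{αs} − 254b·e^{αM} − a]/(127α), the function s ↦ dE/ds is strictly increasing in s on (0, ∞) for any α > 0, b > 0. Hence E is strictly convex in s there and the critical point of E, if it exists, is unique. -/

import Mathlib

open Real Set

theorem strictMonoOn_affine_mul_exp {c α : ℝ} (hc : 0 ≤ c) (hα : 0 < α) :
    StrictMonoOn (fun s => (c + α * s) * exp (α * s)) (Ici 0) := by
  intro x hx y _ hxy
  have hαxy : α * x < α * y := mul_lt_mul_of_pos_left hxy hα
  have hαx : 0 ≤ α * x := mul_nonneg hα.le hx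
  exact mul_lt_mul'' (by linarith) (exp_lt_exp.mpr hαxy) (by linarith) (exp_pos _).le

theorem invertedT_deriv_strictMono_general
    (a b ε M α : ℝ) (hb : 0 < b) (hα : 0 < α)
    (D : ℝ → ℝ)
    (hD : ∀ s : ℝ, D s = ((a - b) * Real.exp (α * ε) + b * (255 + α * s) * Real.exp (α * s)
          - 254 * b * Real.exp (α * M) - a) / (127 * α)) :
    StrictMonoOn D (Set.Ioi (0:ℝ)) ∧
    ∀ s₁ ∈ Set.Ioi (0:ℝ), ∀ s₂ ∈ Set.Ioi (0:ℝ), D s₁ = 0 → D s₂ = 0 → s₁ = s₂ := by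
  have hmono : StrictMonoOn D (Ioi 0) := by
    intro x hx y hy hxy
    have key := strictMonoOn_affine_mul_exp (by norm_num : (0 : ℝ) ≤ 255) hα
      (Ioi_subset_Ici_self hx) (Ioi_subset_Ici_self hy) hxy
    rw [hD, hD, mul_assoc b, mul_assoc b]
    gcongr
  exact ⟨hmono, fun s₁ h₁ s₂ h₂ e₁ e₂ => hmono.injOn h₁ h₂ (e₁.trans e₂.symm)⟩

theorem invertedT_deriv_strictMono
    (a b ε M α : ℝ) (hab : b < a) (hb : 0 < b) (hε : 0 < ε) (hα : 0 < α)
    (D : ℝ → ℝ)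
    (hD : ∀ s : ℝ, D s = ((a - b) * Real.exp (α * ε) + b * (255 + α * s) * Real.exp (α * s)
          - 254 * b * Real.exp (α * M) - a) / (127 * α)) :
    StrictMonoOn D (Set.Ioi (0:ℝ)) ∧
    ∀ s₁ ∈ Set.Ioi (0:ℝ), ∀ s₂ ∈ Set.Ioi (0:ℝ), D s₁ = 0 → D s₂ = 0 → s₁ = s₂ :=
  invertedT_deriv_strictMono_general a b ε M α hb hα D hD
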